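/- arXiv:1512.00343 — 2 statements merged into one kernel-verified Lean document; each statement's English description precedes it below -/
import Mathlib

section
/- Let D ⊆ ℂ be open, u : ℂ → ℂ continuous on D, and let ψ, ψ⁺ : ℂ → ℂ be real-differentiable on D with ∂_z̄ ψ = u·conj(ψ) and ∂_z̄ ψ⁺ = −conj(u)·conj(ψ⁺) on D. Assume moreover that ψ and ψ⁺ are real-differentiable of class C¹ on D. Then at every point of D one has ∂_z̄(ψ·ψ⁺) + ∂_z(conj(ψ·ψ⁺)) = 0, i.e. the real 1-form ψψ⁺ dz − conj(ψψ⁺) dz̄ is closed on D. -/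
/-!
By the Leibniz rule and the two equations, `∂_z̄(ψψ⁺) = a - conj a` with `a = ψ⁺ u conj ψ`, a purely
imaginary number. Since `∂_z (conj f) = conj (∂_z̄ f)`, the second term is `conj (a - conj a)`,
which cancels the first.
-/

open Complex

/-- The Wirtinger derivative ∂_z̄ f(z) = (1/2)((fderiv ℝ f z) 1 + i·((fderiv ℝ f z) i)). -/
noncomputable def dzbar (f : ℂ → ℂ) (z : ℂ) : ℂ :=
  (1 / 2 : ℂ) * ((fderiv ℝ f z) 1 + Complex.I * (fderiv ℝ f z) Complex.I)

/-- The Wirtinger derivative ∂_z f(z) = (1/2)((fderiv ℝ f z) 1 − i·((fderiv ℝ f z) i)). -/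
noncomputable def dz (f : ℂ → ℂ) (z : ℂ) : ℂ :=
  (1 / 2 : ℂ) * ((fderiv ℝ f z) 1 - Complex.I * (fderiv ℝ f z) Complex.I)

open ComplexConjugate

lemma dz_conj (f : ℂ → ℂ) (z : ℂ) : dz (fun w => conj (f w)) z = conj (dzbar f z) := by
  have hconj : ∀ v, fderiv ℝ (fun w => conj (f w)) z v = conj (fderiv ℝ f z v) := fun v => by
    simp only [← Complex.star_def, fderiv_star, ContinuousLinearMap.comp_apply,
      ContinuousLinearEquiv.coe_coe, starL'_apply]
  simp only [dz, dzbar, hconj, map_mul, map_add, conj_I, map_div₀, map_one, map_ofNat]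
  ring

lemma dzbar_mul {f g : ℂ → ℂ} {z : ℂ} (hf : DifferentiableAt ℝ f z)
    (hg : DifferentiableAt ℝ g z) :
    dzbar (fun w => f w * g w) z = f z * dzbar g z + g z * dzbar f z := by
  simp only [dzbar, fderiv_fun_mul hf hg, add_apply, smul_apply, smul_eq_mul]
  ring

theorem statement0_general (D : Set ℂ) (u ψ ψp : ℂ → ℂ)
    (hψ : ∀ z ∈ D, DifferentiableAt ℝ ψ z)
    (hψp : ∀ z ∈ D, DifferentiableAt ℝ ψp z)
    (heq1 : ∀ z ∈ D, dzbar ψ z = u z * (starRingEnd ℂ) (ψ z))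
    (heq2 : ∀ z ∈ D, dzbar ψp z = -(starRingEnd ℂ) (u z) * (starRingEnd ℂ) (ψp z)) :
    ∀ z ∈ D,
      dzbar (fun w => ψ w * ψp w) z
        + dz (fun w => (starRingEnd ℂ) (ψ w * ψp w)) z = 0 := by
  intro z hz
  rw [dz_conj, dzbar_mul (hψ z hz) (hψp z hz), heq1 z hz, heq2 z hz]
  simp only [map_add, map_mul, map_neg, conj_conj]
  ring

/-- if ∂_z̄ ψ = u·conj ψ and ∂_z̄ ψ⁺ = −conj u·conj ψ⁺ on an open D with
ψ, ψ⁺ of class C¹ and u continuous, then ∂_z̄(ψψ⁺) + ∂_z(conj(ψψ⁺)) = 0 on D. -/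
theorem statement0 (D : Set ℂ) (hD : IsOpen D) (u ψ ψp : ℂ → ℂ)
    (hu : ContinuousOn u D)
    (hψ : ∀ z ∈ D, DifferentiableAt ℝ ψ z)
    (hψp : ∀ z ∈ D, DifferentiableAt ℝ ψp z)
    (hψC1 : ContDiffOn ℝ 1 ψ D) (hψpC1 : ContDiffOn ℝ 1 ψp D)
    (heq1 : ∀ z ∈ D, dzbar ψ z = u z * (starRingEnd ℂ) (ψ z))
    (heq2 : ∀ z ∈ D, dzbar ψp z = -(starRingEnd ℂ) (u z) * (starRingEnd ℂ) (ψp z)) :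
    ∀ z ∈ D,
      dzbar (fun w => ψ w * ψp w) z
        + dz (fun w => (starRingEnd ℂ) (ψ w * ψp w)) z = 0 :=
  statement0_general D u ψ ψp hψ hψp heq1 heq2
end

section
/- (Theorem 2, part 3: invariance of the potential under holomorphic change of variables.) Let D, D* ⊆ ℂ be open, let z : D* → D be holomorphic on D* with z'(ζ) ≠ 0 for all ζ ∈ D*, and let s : D* → ℂ be holomorphic on D* with s(ζ)² = z'(ζ) for all ζ ∈ D*. Let ψ, ψ⁺ : ℂ → ℂ and let ω be real-differentiable on D with ∂_z ω = ψ·ψ⁺ and ∂_z̄ ω = −conj(ψ·ψ⁺) on D. Define ψ*(ζ) = ψ(z(ζ))·s(ζ), ψ⁺*(ζ) = ψ⁺(z(ζ))·s(ζ), and ω*(ζ) = ω(z(ζ)) for ζ ∈ D*. Then ∂_ζ ω* = ψ*·ψ⁺* and ∂_ζ̄ ω* = −conj(ψ*·ψ⁺*) on D*; i.e., ω ∘ z is a potential ω_{ψ*,ψ⁺*} for the transformed pair. -/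
open Complex

lemma wirtinger_chain (ω z : ℂ → ℂ) (c ζ : ℂ) (hz : HasDerivAt z c ζ)
    (hω : DifferentiableAt ℝ ω (z ζ)) :
    dz (fun ξ => ω (z ξ)) ζ = c * dz ω (z ζ) ∧
    dzbar (fun ξ => ω (z ξ)) ζ = (starRingEnd ℂ) c * dzbar ω (z ζ) := by
  have hzf : HasFDerivAt z
      (((ContinuousLinearMap.id ℂ ℂ).smulRight c).restrictScalars ℝ) ζ :=
    (hz.hasFDerivAt).restrictScalars ℝ
  have hcomp := (hω.hasFDerivAt).comp ζ hzf
  have hf : fderiv ℝ (fun ξ => ω (z ξ)) ζ =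
      (fderiv ℝ ω (z ζ)).comp (((ContinuousLinearMap.id ℂ ℂ).smulRight c).restrictScalars ℝ) :=
    hcomp.fderiv
  set L := fderiv ℝ ω (z ζ) with hL
  have h1 : (fderiv ℝ (fun ξ => ω (z ξ)) ζ) 1 = L c := by
    rw [hf]; simp
  have hI : (fderiv ℝ (fun ξ => ω (z ξ)) ζ) I = L (I * c) := by
    rw [hf]; simp [mul_comm]
  have e1 : L c = (c.re : ℂ) * L 1 + (c.im : ℂ) * L I := by
    have : c = c.re • (1 : ℂ) + c.im • I := by
      simp [Complex.real_smul]
    rw [this, map_add, map_smul, map_smul]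
    simp [Complex.real_smul]
  have e2 : L (I * c) = -(c.im : ℂ) * L 1 + (c.re : ℂ) * L I := by
    have : I * c = (-c.im) • (1 : ℂ) + c.re • I := by
      simp [Complex.real_smul]
      rw [← Complex.re_add_im c]; ring_nf; simp [Complex.I_sq]; ring
    rw [this, map_add, map_smul, map_smul]
    simp [Complex.real_smul]
  have hcc : (starRingEnd ℂ) c = (c.re : ℂ) - (c.im : ℂ) * I := by
    simp [Complex.ext_iff]
  have hc' : c = (c.re : ℂ) + (c.im : ℂ) * I := (Complex.re_add_im c).symm
  constructor
  · rw [dz, dz, h1, hI, e1, e2]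
    rw [hc']; ring_nf; simp [Complex.I_sq]; ring
  · rw [dzbar, dzbar, h1, hI, e1, e2, hcc]
    ring_nf; simp [Complex.I_sq]; ring

/-- Theorem 2, part 3: if ω is a potential for (ψ, ψ⁺) on D, then
ω* = ω ∘ z is a potential for (ψ*, ψ⁺*) on D*, where ψ*(ζ) = ψ(z(ζ))·s(ζ) and
ψ⁺*(ζ) = ψ⁺(z(ζ))·s(ζ). -/
theorem statement10 (D Dstar : Set ℂ) (hD : IsOpen D) (hDstar : IsOpen Dstar)
    (z z' s : ℂ → ℂ) (hmaps : Set.MapsTo z Dstar D)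
    (hz : ∀ ζ ∈ Dstar, HasDerivAt z (z' ζ) ζ)
    (hz' : ∀ ζ ∈ Dstar, z' ζ ≠ 0)
    (hs : ∀ ζ ∈ Dstar, DifferentiableAt ℂ s ζ)
    (hs2 : ∀ ζ ∈ Dstar, s ζ ^ 2 = z' ζ)
    (ψ ψp ω : ℂ → ℂ)
    (hω : ∀ w ∈ D, DifferentiableAt ℝ ω w)
    (hωdz : ∀ w ∈ D, dz ω w = ψ w * ψp w)
    (hωdzbar : ∀ w ∈ D, dzbar ω w = -(starRingEnd ℂ) (ψ w * ψp w)) :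
    ∀ ζ ∈ Dstar,
      dz (fun ξ => ω (z ξ)) ζ = (ψ (z ζ) * s ζ) * (ψp (z ζ) * s ζ) ∧
      dzbar (fun ξ => ω (z ξ)) ζ
        = -(starRingEnd ℂ) ((ψ (z ζ) * s ζ) * (ψp (z ζ) * s ζ)) := by
  intro ζ hζ
  have hwD := hmaps hζ
  obtain ⟨h1, h2⟩ := wirtinger_chain ω z (z' ζ) ζ (hz ζ hζ) (hω _ hwD)
  constructor
  · rw [h1, hωdz _ hwD, ← hs2 ζ hζ]; ring
  · have e : ψ (z ζ) * s ζ * (ψp (z ζ) * s ζ) = z' ζ * (ψ (z ζ) * ψp (z ζ)) := by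
      rw [← hs2 ζ hζ]; ring
    rw [h2, hωdzbar _ hwD, e]; simp [map_mul]
end
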